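/- For every natural number k ≥ 1 there exists a finite simple graph G with χ(G) = 3, vs_χ(G) = 2, and ivs_χ(G) = k + 1. -/

import Mathlib

open SimpleGraph

/-- The chromatic number of a graph, as a natural number (for finite graphs this
is the usual chromatic number). -/
noncomputable def chromNum {V : Type*} (G : SimpleGraph V) : ℕ :=
  sInf {n : ℕ | G.Colorable n}

/-- The maximum degree Δ(G) of a finite graph. -/
noncomputable def maxDeg {V : Type*} [Fintype V] (G : SimpleGraph V) : ℕ :=
  Finset.univ.sup fun v => Nat.card (G.neighborSet v)

/-- The chromatic vertex stability number: the minimum number of vertices whose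
deletion results in a graph with chromatic number χ(G) − 1. -/
noncomputable def vsChi {V : Type*} [Fintype V] (G : SimpleGraph V) : ℕ :=
  sInf {k : ℕ | ∃ S : Finset V, S.card = k ∧
    chromNum (G.induce ((S : Set V))ᶜ) = chromNum G - 1}

/-- The independent chromatic vertex stability number: the minimum size of an
independent set of vertices whose deletion results in a graph with chromatic
number χ(G) − 1. -/
noncomputable def ivsChi {V : Type*} [Fintype V] (G : SimpleGraph V) : ℕ :=
  sInf {k : ℕ | ∃ S : Finset V, S.card = k ∧
    (∀ u ∈ S, ∀ v ∈ S, ¬ G.Adj u v) ∧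
    chromNum (G.induce ((S : Set V))ᶜ) = chromNum G - 1}

/-- The chromatic edge stability number: the minimum number of edges whose
deletion results in a graph with chromatic number χ(G) − 1. -/
noncomputable def esChi {V : Type*} (G : SimpleGraph V) : ℕ :=
  sInf {k : ℕ | ∃ F : Finset (Sym2 V), ↑F ⊆ G.edgeSet ∧ F.card = k ∧
    chromNum (G.deleteEdges ↑F) = chromNum G - 1}

/-!
The graph `gapGraph k` consists of the edge `uv`, the triangles `u pᵢ qᵢ` and `v xᵢ yᵢ` for
`i < k`, and the edges `v pᵢ`; it is 3-colourable and contains triangles. A deletion that leaves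
a triangle leaves a graph that is not 2-colourable, and the deletions realising the bounds leave
bipartite graphs with an edge. Deleting `u, v` leaves a matching, while one vertex misses one of
the disjoint triangles `u p₀ q₀`, `v x₀ y₀`; so `vs_χ = 2`. An independent `S` meeting every
triangle contains at most one of `u, v`. If it contains `u`, it meets each of the `k` disjoint
edges `xᵢ yᵢ`; if it contains `v`, it contains no `pᵢ`, hence every `qᵢ`; if it contains neither,
it meets each of the `2k` disjoint edges `pᵢ qᵢ`, `xᵢ yᵢ`. So `|S| ≥ k + 1`, attained by
`{v, q₀, …, q_{k-1}}`. An isomorphism onto `Fin n` preserves all three invariants.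
-/

namespace SimpleGraph

variable {V W : Type*} {G : SimpleGraph V} {H : SimpleGraph W}

theorem chromNum_eq_succ_iff {n : ℕ} :
    chromNum G = n + 1 ↔ G.Colorable (n + 1) ∧ ¬ G.Colorable n := by
  constructor
  · intro h
    have hne : {m | G.Colorable m}.Nonempty := by
      by_contra hem
      simp [chromNum, Set.not_nonempty_iff_eq_empty.1 hem] at h
    refine ⟨h ▸ Nat.sInf_mem hne, fun hn => ?_⟩
    have : chromNum G ≤ n := Nat.sInf_le hn
    omega
  · rintro ⟨hcol, hn⟩
    refine le_antisymm (Nat.sInf_le hcol) (le_csInf ⟨_, hcol⟩ fun m hm => ?_)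
    by_contra! hlt
    exact hn (hm.mono (by omega))

theorem chromNum_eq_of_hom_of_hom (f : G →g H) (g : H →g G) : chromNum G = chromNum H := by
  unfold chromNum
  congr 1
  ext n
  exact ⟨fun h => h.of_hom g, fun h => h.of_hom f⟩

theorem not_colorable_two_of_triangle {a b c : V} (hab : G.Adj a b) (hac : G.Adj a c)
    (hbc : G.Adj b c) : ¬ G.Colorable 2 := fun h => by
  classical
  exact h.cliqueFree (m := 3) (by norm_num) {a, b, c} (is3Clique_triple_iff.2 ⟨hab, hac, hbc⟩)

theorem chromNum_induce_compl_eq_two {S : Set V} (C : V → Fin 2)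
    (hC : ∀ a b, a ∉ S → b ∉ S → G.Adj a b → C a ≠ C b) {a b : V} (ha : a ∉ S) (hb : b ∉ S)
    (hab : G.Adj a b) : chromNum (G.induce Sᶜ) = 2 := by
  refine chromNum_eq_succ_iff.2 ⟨⟨Coloring.mk (fun a => C a) fun {c d} h => hC c d c.2 d.2 h⟩, ?_⟩
  rintro ⟨C₁⟩
  exact C₁.valid (G := G.induce Sᶜ) (v := ⟨a, ha⟩) (w := ⟨b, hb⟩) hab (Subsingleton.elim _ _)

theorem chromNum_induce_compl_ne_two {S : Set V} {a b c : V} (ha : a ∉ S) (hb : b ∉ S)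
    (hc : c ∉ S) (hab : G.Adj a b) (hac : G.Adj a c) (hbc : G.Adj b c) :
    chromNum (G.induce Sᶜ) ≠ 2 := fun h =>
  not_colorable_two_of_triangle (G := G.induce Sᶜ) (a := ⟨a, ha⟩) (b := ⟨b, hb⟩) (c := ⟨c, hc⟩)
    hab hac hbc (chromNum_eq_succ_iff.1 h).1

namespace Iso

theorem chromNum_eq (e : G ≃g H) : chromNum G = chromNum H :=
  chromNum_eq_of_hom_of_hom (Iso.toHom e) (Iso.toHom e.symm)

theorem chromNum_induce_compl_map (e : G ≃g H) (S : Finset V) :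
    chromNum (H.induce (S.map e.toEquiv.toEmbedding : Set W)ᶜ) =
      chromNum (G.induce (S : Set V)ᶜ) :=
  chromNum_eq_of_hom_of_hom
    (induceHom (Iso.toHom e.symm) fun _ hw hS => hw (by simpa using ⟨_, hS, by simp⟩))
    (induceHom (Iso.toHom e) fun _ hv hS => hv (by simpa using hS))

variable [Fintype V] [Fintype W]

theorem vsChi_eq (e : G ≃g H) : vsChi G = vsChi H := by
  unfold vsChi
  congr 1
  ext m
  constructor
  · rintro ⟨S, rfl, hS⟩
    exact ⟨S.map e.toEquiv.toEmbedding, Finset.card_map _,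
      by rw [chromNum_induce_compl_map, hS, chromNum_eq e]⟩
  · rintro ⟨T, rfl, hT⟩
    exact ⟨T.map e.symm.toEquiv.toEmbedding, Finset.card_map _,
      by rw [chromNum_induce_compl_map, hT, chromNum_eq e]⟩

theorem ivsChi_eq (e : G ≃g H) : ivsChi G = ivsChi H := by
  unfold ivsChi
  congr 1
  ext m
  constructor
  · rintro ⟨S, rfl, hind, hS⟩
    refine ⟨S.map e.toEquiv.toEmbedding, Finset.card_map _, ?_,
      by rw [chromNum_induce_compl_map, hS, chromNum_eq e]⟩
    simp only [Finset.mem_map_equiv]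
    exact fun a ha b hb hab => hind _ ha _ hb ((map_adj_iff e.symm).2 hab)
  · rintro ⟨T, rfl, hind, hT⟩
    refine ⟨T.map e.symm.toEquiv.toEmbedding, Finset.card_map _, ?_,
      by rw [chromNum_induce_compl_map, hT, chromNum_eq e]⟩
    simp only [Finset.mem_map_equiv]
    exact fun a ha b hb hab => hind _ ha _ hb ((map_adj_iff e).2 hab)

end Iso

end SimpleGraph

theorem Finset.exists_disjoint_of_card_lt {ι α : Type*} [Fintype ι] (T : ι → Finset α)
    (hT : Pairwise fun i j => Disjoint (T i) (T j)) {S : Finset α}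
    (hS : S.card < Fintype.card ι) : ∃ i, Disjoint (T i) S := by
  by_contra! h
  refine hS.not_ge (Finset.card_le_card_of_forall_subsingleton (fun i a => a ∈ T i)
    (fun i _ => ?_) fun a _ i hi j hj => ?_)
  · obtain ⟨a, hT, hS⟩ := Finset.not_disjoint_iff.1 (h i)
    exact ⟨a, hS, hT⟩
  · by_contra hij
    exact Finset.disjoint_left.1 (hT hij) hi.2 hj.2

inductive GapVertex (k : ℕ)
  | u
  | v
  | p (i : Fin k)
  | q (i : Fin k)
  | x (i : Fin k)
  | y (i : Fin k)
  deriving DecidableEq, Fintype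

namespace GapVertex

variable {k : ℕ}

def Edge : GapVertex k → GapVertex k → Prop
  | u, v => True
  | u, p _ => True
  | u, q _ => True
  | p i, q j => i = j
  | v, p _ => True
  | v, x _ => True
  | v, y _ => True
  | x i, y j => i = j
  | _, _ => False

end GapVertex

open GapVertex

def gapGraph (k : ℕ) : SimpleGraph (GapVertex k) := SimpleGraph.fromRel Edge

namespace gapGraph

variable {k : ℕ}

@[simp]
theorem adj_iff {a b : GapVertex k} : (gapGraph k).Adj a b ↔ a ≠ b ∧ (Edge a b ∨ Edge b a) :=
  SimpleGraph.fromRel_adj _ _ _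

def threeColoring : GapVertex k → Fin 3
  | u => 0 | v => 1 | p _ => 2 | q _ => 1 | x _ => 0 | y _ => 2

theorem colorable_three : (gapGraph k).Colorable 3 :=
  ⟨SimpleGraph.Coloring.mk threeColoring fun {a b} h => by
    cases a <;> cases b <;> simp_all [Edge, threeColoring]⟩

theorem chromNum_eq (hk : 0 < k) : chromNum (gapGraph k) = 3 :=
  chromNum_eq_succ_iff.2 ⟨colorable_three, not_colorable_two_of_triangle (a := u)
    (b := p ⟨0, hk⟩) (c := q ⟨0, hk⟩) (by simp [Edge]) (by simp [Edge]) (by simp [Edge])⟩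

theorem chromNum_induce_compl_ne_two_of_upq {S : Finset (GapVertex k)} {i : Fin k} (hu : u ∉ S)
    (hp : p i ∉ S) (hq : q i ∉ S) :
    chromNum ((gapGraph k).induce (S : Set (GapVertex k))ᶜ) ≠ 2 :=
  chromNum_induce_compl_ne_two hu hp hq (by simp [Edge]) (by simp [Edge]) (by simp [Edge])

theorem chromNum_induce_compl_ne_two_of_vxy {S : Finset (GapVertex k)} {i : Fin k} (hv : v ∉ S)
    (hx : x i ∉ S) (hy : y i ∉ S) :
    chromNum ((gapGraph k).induce (S : Set (GapVertex k))ᶜ) ≠ 2 :=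
  chromNum_induce_compl_ne_two hv hx hy (by simp [Edge]) (by simp [Edge]) (by simp [Edge])

def coloringOffUV : GapVertex k → Fin 2
  | q _ => 1 | y _ => 1 | _ => 0

theorem chromNum_induce_compl_uv (hk : 0 < k) :
    chromNum ((gapGraph k).induce (({u, v} : Finset (GapVertex k)) : Set (GapVertex k))ᶜ) = 2 :=
  chromNum_induce_compl_eq_two coloringOffUV
    (by intro a b ha hb; cases a <;> cases b <;> simp_all [Edge, coloringOffUV])
    (a := p ⟨0, hk⟩) (b := q ⟨0, hk⟩) (by simp) (by simp) (by simp [Edge])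

theorem vsChi_eq (hk : 0 < k) : vsChi (gapGraph k) = 2 := by
  rw [vsChi, chromNum_eq hk]
  refine IsLeast.csInf_eq ⟨⟨{u, v}, by simp, chromNum_induce_compl_uv hk⟩, ?_⟩
  rintro m ⟨S, rfl, hS⟩
  by_contra! hlt
  let i₀ : Fin k := ⟨0, hk⟩
  obtain ⟨b, hb⟩ := Finset.exists_disjoint_of_card_lt
    (fun b : Bool => if b then {u, p i₀, q i₀} else {v, x i₀, y i₀})
    (by rintro (_ | _) (_ | _) h <;> simp_all) (S := S) (by simpa using hlt)
  cases b <;> simp only [Bool.false_eq_true, if_false, if_true, Finset.disjoint_insert_left,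
    Finset.disjoint_singleton_left] at hb
  · exact chromNum_induce_compl_ne_two_of_vxy hb.1 hb.2.1 hb.2.2 hS
  · exact chromNum_induce_compl_ne_two_of_upq hb.1 hb.2.1 hb.2.2 hS

def vqSet (k : ℕ) : Finset (GapVertex k) := insert v (Finset.univ.image q)

theorem card_vqSet : (vqSet k).card = k + 1 := by
  rw [vqSet, Finset.card_insert_of_notMem (by simp),
    Finset.card_image_of_injective _ fun _ _ => q.inj, Finset.card_univ, Fintype.card_fin]

theorem not_adj_of_mem_vqSet : ∀ a ∈ vqSet k, ∀ b ∈ vqSet k, ¬ (gapGraph k).Adj a b := by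
  simp only [vqSet, Finset.mem_insert, Finset.mem_image, Finset.mem_univ, true_and]
  rintro a (rfl | ⟨i, rfl⟩) b (rfl | ⟨j, rfl⟩) <;> simp [Edge]

def coloringOffVQ : GapVertex k → Fin 2
  | p _ => 1 | y _ => 1 | _ => 0

theorem chromNum_induce_compl_vqSet (hk : 0 < k) :
    chromNum ((gapGraph k).induce (vqSet k : Set (GapVertex k))ᶜ) = 2 :=
  chromNum_induce_compl_eq_two coloringOffVQ
    (by intro a b ha hb; cases a <;> cases b <;> simp_all [vqSet, Edge, coloringOffVQ])
    (a := u) (b := p ⟨0, hk⟩) (by simp [vqSet]) (by simp [vqSet]) (by simp [Edge])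

theorem exists_triangle_disjoint_of_independent {S : Finset (GapVertex k)} (hk : 0 < k)
    (hS : S.card ≤ k) (hind : ∀ a ∈ S, ∀ b ∈ S, ¬ (gapGraph k).Adj a b) :
    (∃ i, u ∉ S ∧ p i ∉ S ∧ q i ∉ S) ∨ (∃ i, v ∉ S ∧ x i ∉ S ∧ y i ∉ S) := by
  by_cases hu : u ∈ S
  · have hv : v ∉ S := fun hv => hind _ hu _ hv (by simp [Edge])
    obtain ⟨_ | i, hi⟩ := Finset.exists_disjoint_of_card_lt
      (fun o : Option (Fin k) => o.elim {u} fun i => {x i, y i})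
      (by rintro (_ | i) (_ | j) h <;> simp_all [eq_comm]) (S := S)
      (by simpa using Nat.lt_succ_of_le hS)
    · simp_all
    · simp only [Option.elim, Finset.disjoint_insert_left, Finset.disjoint_singleton_left] at hi
      exact Or.inr ⟨i, hv, hi⟩
  by_cases hv : v ∈ S
  · obtain ⟨_ | i, hi⟩ := Finset.exists_disjoint_of_card_lt
      (fun o : Option (Fin k) => o.elim {v} fun i => {q i})
      (by rintro (_ | i) (_ | j) h <;> simp_all [eq_comm]) (S := S)
      (by simpa using Nat.lt_succ_of_le hS)
    · simp_all
    · simp only [Option.elim, Finset.disjoint_singleton_left] at hi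
      exact Or.inl ⟨i, hu, fun hp => hind _ hv _ hp (by simp [Edge]), hi⟩
  obtain ⟨i | i, hi⟩ := Finset.exists_disjoint_of_card_lt
    (fun o : Fin k ⊕ Fin k => o.elim (fun i => {p i, q i}) fun i => {x i, y i})
    (by rintro (_ | i) (_ | j) h <;> simp_all [eq_comm]) (S := S) (by simp; omega)
  all_goals simp only [Sum.elim_inl, Sum.elim_inr, Finset.disjoint_insert_left,
    Finset.disjoint_singleton_left] at hi
  exacts [Or.inl ⟨i, hu, hi⟩, Or.inr ⟨i, hv, hi⟩]

theorem ivsChi_eq (hk : 0 < k) : ivsChi (gapGraph k) = k + 1 := by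
  rw [ivsChi, chromNum_eq hk]
  refine IsLeast.csInf_eq
    ⟨⟨vqSet k, card_vqSet, not_adj_of_mem_vqSet, chromNum_induce_compl_vqSet hk⟩, ?_⟩
  rintro m ⟨S, rfl, hind, hS⟩
  by_contra! hlt
  obtain ⟨i, hu, hp, hq⟩ | ⟨i, hv, hx, hy⟩ :=
    exists_triangle_disjoint_of_independent hk (Nat.le_of_lt_succ hlt) hind
  exacts [chromNum_induce_compl_ne_two_of_upq hu hp hq hS,
    chromNum_induce_compl_ne_two_of_vxy hv hx hy hS]

end gapGraph

theorem stmt_10 (k : ℕ) (hk : 1 ≤ k) :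
    ∃ (n : ℕ) (G : SimpleGraph (Fin n)),
      chromNum G = 3 ∧ vsChi G = 2 ∧ ivsChi G = k + 1 := by
  let e := Iso.map (Fintype.equivFin (GapVertex k)) (gapGraph k)
  exact ⟨_, _, (Iso.chromNum_eq e).symm.trans (gapGraph.chromNum_eq hk),
    (Iso.vsChi_eq e).symm.trans (gapGraph.vsChi_eq hk),
    (Iso.ivsChi_eq e).symm.trans (gapGraph.ivsChi_eq hk)⟩
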